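/- Suppose char(k) = 0. Then k((F)) is a Hahn field in k((G)) (a subfield containing all monomials αt^g) if and only if F satisfies (S1) all singletons {g} ∈ F, (S2) closure under subsets, (S3) closure under finite unions, (A2) closure under sumsets, and (A4) closure under finite-sum closures of subsets of G^{≥0}. In particular, every Hahn field of the form k((F)) with char(k) = 0 is truncation closed. -/

import Mathlib

open scoped Pointwise

/-! Write `1_A` for the Hahn series with coefficient `1` on `A`. In characteristic zero the
coefficients of `1_A + 1_B` and `1_A * 1_B` are positive integers on `A ∪ B` and `A + B`, and
`1_B = (1_A + 1_B) - 1_A` for `B ⊆ A`; so a field `k((F))` forces (S2), (S3), (A2). For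
`A ⊆ G^{>0}`, `(1 - 1_A)⁻¹ = ∑ 1_A ^ n` has support the monoid generated by `A`: over `ℚ` all
coefficients are nonnegative, so no cancellation occurs, and `ℚ → k` is injective; this gives (A4).
Conversely, if `x` has order `g` and leading coefficient `c`, then
`x⁻¹ = c⁻¹ t^(-g) ∑ uⁿ` with `u = 1 - c⁻¹ t^(-g) x`, so `supp x⁻¹ ⊆ -g + ⟨-g + supp x⟩`, where
`-g + supp x ⊆ G^{≥0}`; the closure properties then keep `k((F))` closed under inversion. -/

noncomputable section

namespace HahnSeries

section Indicator

variable {Γ R : Type*}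

variable (R) in
def indicator [PartialOrder Γ] [Zero R] [One R] (A : Set Γ) (hA : A.IsPWO) : R⟦Γ⟧ :=
  ⟨A.indicator 1, hA.mono Set.support_indicator_subset⟩

@[simp]
theorem coeff_indicator [PartialOrder Γ] [Zero R] [One R] {A : Set Γ} (hA : A.IsPWO) (g : Γ) :
    (indicator R A hA).coeff g = A.indicator 1 g :=
  rfl

@[simp]
theorem support_indicator [PartialOrder Γ] [Zero R] [One R] [NeZero (1 : R)] {A : Set Γ}
    (hA : A.IsPWO) : (indicator R A hA).support = A := by
  ext g
  by_cases hg : g ∈ A <;> simp [hg]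

theorem map_indicator [PartialOrder Γ] {S : Type*} [Semiring R] [Semiring S] (f : R →+* S)
    {A : Set Γ} (hA : A.IsPWO) : (indicator R A hA).map f = indicator S A hA := by
  ext g
  by_cases hg : g ∈ A <;> simp [hg]

theorem support_indicator_add_indicator [PartialOrder Γ] [AddMonoidWithOne R] [CharZero R]
    {A B : Set Γ} (hA : A.IsPWO) (hB : B.IsPWO) :
    (indicator R A hA + indicator R B hB).support = A ∪ B := by
  ext g
  by_cases hgA : g ∈ A <;> by_cases hgB : g ∈ B <;> simp [hgA, hgB, one_add_one_eq_two]

theorem support_indicator_mul_indicator [AddCommMonoid Γ] [PartialOrder Γ]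
    [IsOrderedCancelAddMonoid Γ] [Semiring R] [CharZero R] {A B : Set Γ} (hA : A.IsPWO)
    (hB : B.IsPWO) : (indicator R A hA * indicator R B hB).support = A + B := by
  ext g
  have hterm : ∀ ij ∈ Finset.antidiagonal (indicator R A hA).isPWO_support
      (indicator R B hB).isPWO_support g,
      (indicator R A hA).coeff ij.1 * (indicator R B hB).coeff ij.2 = 1 := by
    intro ij hij
    obtain ⟨hi, hj, -⟩ := Finset.mem_antidiagonal.1 hij
    rw [support_indicator] at hi hj
    simp [hi, hj]
  rw [mem_support, coeff_mul, Finset.sum_congr rfl hterm, Finset.sum_const, nsmul_one,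
    Nat.cast_ne_zero, Finset.card_ne_zero]
  constructor
  · rintro ⟨⟨a, b⟩, hab⟩
    obtain ⟨ha, hb, rfl⟩ := Finset.mem_antidiagonal.1 hab
    rw [support_indicator] at ha hb
    exact Set.add_mem_add ha hb
  · rintro ⟨a, ha, b, hb, rfl⟩
    exact ⟨(a, b), Finset.mem_antidiagonal.2 ⟨by rwa [support_indicator], by rwa [support_indicator], rfl⟩⟩

end Indicator

theorem zero_lt_orderTop_of_support_subset {Γ R : Type*} [Zero Γ] [LinearOrder Γ] [Zero R]
    {x : R⟦Γ⟧} (hx : x.support ⊆ Set.Ioi 0) : 0 < x.orderTop := by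
  rcases eq_or_ne x 0 with rfl | hx0
  · simp
  · rw [orderTop_of_ne_zero hx0, WithTop.coe_pos]
    exact hx (x.isWF_support.min_mem (support_nonempty_iff.2 hx0))

theorem support_hsum_of_nonneg {Γ R α : Type*} [PartialOrder Γ] [AddCommMonoid R] [PartialOrder R]
    [IsOrderedCancelAddMonoid R] {s : SummableFamily Γ R α} (hs : ∀ a g, 0 ≤ (s a).coeff g) :
    s.hsum.support = ⋃ a, (s a).support := by
  refine SummableFamily.support_hsum_subset.antisymm fun g hg => ?_
  obtain ⟨a, ha⟩ := Set.mem_iUnion.1 hg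
  rw [mem_support, SummableFamily.coeff_hsum]
  exact (finsum_pos (fun b => hs b g) ⟨a, (hs a g).lt_of_ne' ha⟩
    (s.finite_co_support g)).ne'

section Powers

variable {Γ R : Type*} [AddCommMonoid Γ] [LinearOrder Γ] [IsOrderedCancelAddMonoid Γ]

theorem coeff_pow_nonneg [Semiring R] [PartialOrder R] [IsOrderedRing R] {x : R⟦Γ⟧}
    (hx : ∀ g, 0 ≤ x.coeff g) (n : ℕ) (g : Γ) : 0 ≤ (x ^ n).coeff g := by
  induction n generalizing g with
  | zero => rw [pow_zero, coeff_one]; split_ifs <;> simp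
  | succ n ih =>
    rw [pow_succ, coeff_mul]
    exact Finset.sum_nonneg fun ij _ => mul_nonneg (ih _) (hx _)

theorem iUnion_support_pow_of_nonneg [Semiring R] [PartialOrder R] [IsStrictOrderedRing R]
    {x : R⟦Γ⟧} (hx : ∀ g, 0 ≤ x.coeff g) :
    ⋃ n, (x ^ n).support = AddSubmonoid.closure x.support := by
  refine (Set.iUnion_subset (SummableFamily.support_pow_subset_closure x)).antisymm fun g hg => ?_
  suffices ∃ n, 0 < (x ^ n).coeff g by
    obtain ⟨n, hn⟩ := this
    exact Set.mem_iUnion.2 ⟨n, hn.ne'⟩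
  induction hg using AddSubmonoid.closure_induction with
  | mem g hg => exact ⟨1, by rw [pow_one]; exact (hx g).lt_of_ne' hg⟩
  | zero => exact ⟨0, by simp⟩
  | add g h _ _ ihg ihh =>
    obtain ⟨m, hm⟩ := ihg
    obtain ⟨n, hn⟩ := ihh
    refine ⟨m + n, ?_⟩
    rw [_root_.pow_add, coeff_mul]
    refine Finset.sum_pos' (fun ij _ => mul_nonneg (coeff_pow_nonneg hx _ _)
      (coeff_pow_nonneg hx _ _)) ⟨(g, h), ?_, mul_pos hm hn⟩
    exact Finset.mem_antidiagonal.2 ⟨hm.ne', hn.ne', rfl⟩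

end Powers

theorem support_inv_one_sub_of_nonneg {Γ R : Type*} [AddCommGroup Γ] [LinearOrder Γ]
    [IsOrderedAddMonoid Γ] [Field R] [LinearOrder R] [IsStrictOrderedRing R] {x : R⟦Γ⟧}
    (hx : 0 < x.orderTop) (hx' : ∀ g, 0 ≤ x.coeff g) :
    (1 - x)⁻¹.support = AddSubmonoid.closure x.support := by
  rw [inv_eq_of_mul_eq_one_right (SummableFamily.one_sub_self_mul_hsum_powers hx),
    support_hsum_of_nonneg, SummableFamily.coe_powers hx, iUnion_support_pow_of_nonneg hx']
  simpa [hx] using coeff_pow_nonneg hx'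

theorem support_map_of_injective {Γ R S F : Type*} [PartialOrder Γ] [Zero R] [Zero S]
    [FunLike F R S] [ZeroHomClass F R S] {f : F} (hf : Function.Injective f) (x : R⟦Γ⟧) :
    (x.map f).support = x.support := by
  ext g
  simp [map_eq_zero_iff f hf]

def mapRingHom {Γ R S : Type*} [AddCommMonoid Γ] [PartialOrder Γ] [IsOrderedCancelAddMonoid Γ]
    [Semiring R] [Semiring S] (f : R →+* S) : R⟦Γ⟧ →+* S⟦Γ⟧ where
  toFun x := x.map f
  map_zero' := HahnSeries.map_zero (f : ZeroHom R S)
  map_one' := HahnSeries.map_one f.toMonoidWithZeroHom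
  map_add' _ _ := HahnSeries.map_add (f : R →+ S)
  map_mul' _ _ := HahnSeries.map_mul (f : R →ₙ+* S)

@[simp]
theorem mapRingHom_apply {Γ R S : Type*} [AddCommMonoid Γ] [PartialOrder Γ]
    [IsOrderedCancelAddMonoid Γ] [Semiring R] [Semiring S] (f : R →+* S) (x : R⟦Γ⟧) :
    mapRingHom f x = x.map f :=
  rfl

theorem support_inv_subset {Γ R : Type*} [AddCommGroup Γ] [LinearOrder Γ]
    [IsOrderedAddMonoid Γ] [Field R] (x : R⟦Γ⟧) :
    x⁻¹.support ⊆ {-x.order} + AddSubmonoid.closure (({-x.order} : Set Γ) + x.support) := by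
  rcases eq_or_ne x 0 with rfl | hx
  · simp
  set u := 1 - single (-x.order) x.leadingCoeff⁻¹ * x
  have hu : 0 < u.orderTop :=
    unit_aux x (inv_mul_cancel₀ (leadingCoeff_ne_zero.2 hx)) _ (neg_add_cancel _)
  have hu_supp : u.support ⊆ {-x.order} + x.support := by
    refine (support_sub_subset _ _).trans (Set.union_subset ?_ ?_)
    · rw [support_one]
      exact Set.singleton_subset_iff.2
        ⟨-x.order, rfl, x.order, coeff_order_eq_zero.not.2 hx, neg_add_cancel _⟩
    · exact support_mul_subset.trans (Set.add_subset_add support_single_subset le_rfl)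
  rw [inv_def]
  refine support_mul_subset.trans (Set.add_subset_add support_single_subset fun g hg => ?_)
  obtain ⟨n, hn⟩ := Set.mem_iUnion.1 (SummableFamily.support_hsum_subset hg)
  rw [SummableFamily.coe_powers hu] at hn
  exact AddSubmonoid.closure_mono hu_supp (SummableFamily.support_pow_subset_closure u n hn)

theorem neg_order_add_support_subset {Γ R : Type*} [AddCommGroup Γ] [LinearOrder Γ]
    [IsOrderedAddMonoid Γ] [Zero R] (x : R⟦Γ⟧) : {-x.order} + x.support ⊆ Set.Ici 0 := by
  rintro _ ⟨_, rfl, g, hg, rfl⟩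
  exact le_neg_add_iff_le.2 (order_le_of_coeff_ne_zero hg)

theorem support_inv_one_sub_indicator {Γ k : Type*} [AddCommGroup Γ] [LinearOrder Γ]
    [IsOrderedAddMonoid Γ] [Field k] [CharZero k] {A : Set Γ} (hA : A.IsPWO)
    (hA0 : A ⊆ Set.Ioi 0) :
    (1 - indicator k A hA)⁻¹.support = AddSubmonoid.closure A := by
  have hpos : 0 < (indicator ℚ A hA).orderTop :=
    zero_lt_orderTop_of_support_subset (by rwa [support_indicator])
  have hnonneg (g : Γ) : 0 ≤ (indicator ℚ A hA).coeff g :=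
    Set.indicator_nonneg (fun _ _ => zero_le_one) g
  have hcast : 1 - indicator k A hA = mapRingHom (Rat.castHom k) (1 - indicator ℚ A hA) := by
    rw [map_sub, map_one, mapRingHom_apply, map_indicator]
  rw [hcast, ← map_inv₀, mapRingHom_apply, support_map_of_injective (Rat.castHom k).injective,
    support_inv_one_sub_of_nonneg hpos hnonneg, support_indicator]

end HahnSeries

namespace HahnHull

open HahnSeries

variable {G k : Type*} [AddCommGroup G] [LinearOrder G] [IsOrderedAddMonoid G] [Field k]
  {F : Set (Set G)} {K : Subfield k⟦G⟧}

theorem indicator_mem (hK : ∀ a, a ∈ K ↔ a.support ∈ F) {A : Set G} (hA : A ∈ F)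
    (hA' : A.IsPWO) : indicator k A hA' ∈ K :=
  (hK _).2 (by rwa [support_indicator])

theorem subset_mem [CharZero k] (hK : ∀ a, a ∈ K ↔ a.support ∈ F)
    (hWF : ∀ A ∈ F, A.IsWF) {A B : Set G} (hA : A ∈ F) (hBA : B ⊆ A) : B ∈ F := by
  have hA' := (hWF A hA).isPWO
  have hB' := hA'.mono hBA
  have hsum : indicator k A hA' + indicator k B hB' ∈ K :=
    (hK _).2 (by rwa [support_indicator_add_indicator, Set.union_eq_self_of_subset_right hBA])
  have hB := K.sub_mem hsum (indicator_mem hK hA hA')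
  rwa [add_sub_cancel_left, hK, support_indicator] at hB

theorem union_mem [CharZero k] (hK : ∀ a, a ∈ K ↔ a.support ∈ F)
    (hWF : ∀ A ∈ F, A.IsWF) {A B : Set G} (hA : A ∈ F) (hB : B ∈ F) : A ∪ B ∈ F := by
  have h := K.add_mem (indicator_mem hK hA (hWF A hA).isPWO) (indicator_mem hK hB (hWF B hB).isPWO)
  rwa [hK, support_indicator_add_indicator] at h

theorem add_mem [CharZero k] (hK : ∀ a, a ∈ K ↔ a.support ∈ F)
    (hWF : ∀ A ∈ F, A.IsWF) {A B : Set G} (hA : A ∈ F) (hB : B ∈ F) : A + B ∈ F := by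
  have h := K.mul_mem (indicator_mem hK hA (hWF A hA).isPWO) (indicator_mem hK hB (hWF B hB).isPWO)
  rwa [hK, support_indicator_mul_indicator] at h

theorem closure_mem [CharZero k] (hK : ∀ a, a ∈ K ↔ a.support ∈ F)
    (hWF : ∀ A ∈ F, A.IsWF) {A : Set G} (hA : A ∈ F) (hA0 : A ⊆ Set.Ici 0) :
    (AddSubmonoid.closure A : Set G) ∈ F := by
  have hpos : A \ {0} ⊆ Set.Ioi 0 := fun g hg => lt_of_le_of_ne' (hA0 hg.1) hg.2
  have hA' : A \ {0} ∈ F := subset_mem hK hWF hA Set.sdiff_subset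
  have h := K.inv_mem (K.sub_mem K.one_mem (indicator_mem hK hA' (hWF _ hA').isPWO))
  rwa [hK, support_inv_one_sub_indicator _ hpos, AddSubmonoid.closure_sdiff_singleton_zero] at h

def subfield (hS1 : ∀ g : G, ({g} : Set G) ∈ F) (hS2 : ∀ A ∈ F, ∀ B ⊆ A, B ∈ F)
    (hS3 : ∀ A ∈ F, ∀ B ∈ F, A ∪ B ∈ F) (hA2 : ∀ A ∈ F, ∀ B ∈ F, A + B ∈ F)
    (hA4 : ∀ A ∈ F, A ⊆ Set.Ici 0 → (AddSubmonoid.closure A : Set G) ∈ F) :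
    Subfield k⟦G⟧ where
  carrier := {a | a.support ∈ F}
  zero_mem' := by simpa using hS2 _ (hS1 0) ∅ (Set.empty_subset _)
  one_mem' := hS2 _ (hS1 0) _ support_one.subset
  add_mem' ha hb := hS2 _ (hS3 _ ha _ hb) _ (support_add_subset _ _)
  neg_mem' ha := by simpa [support_neg] using ha
  mul_mem' ha hb := hS2 _ (hA2 _ ha _ hb) _ support_mul_subset
  inv_mem' x hx := hS2 _ (hA2 _ (hS1 _) _ (hA4 _ (hA2 _ (hS1 _) _ hx)
    (neg_order_add_support_subset x))) _ (support_inv_subset x)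

end HahnHull

end

/-- Suppose `char k = 0`. Then `k((F))` is a Hahn field in `k((G))` (a
subfield containing all monomials `α t^g`) if and only if `F` satisfies (S1) all singletons
`{g} ∈ F`, (S2) closure under subsets, (S3) closure under finite unions, (A2) closure under
sumsets, and (A4) closure under finite-sum closures of members contained in `G^{≥0}`.
In particular, every Hahn field of the form `k((F))` with `char k = 0` is truncation
closed: if `A ∈ F` and `B` is an initial segment of `A` then `B ∈ F`. -/
theorem khull_hahnField_iff_charZero
    {G : Type*} [AddCommGroup G] [LinearOrder G] [IsOrderedAddMonoid G] {k : Type*} [Field k] [CharZero k]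
    (F : Set (Set G)) (hWF : ∀ A ∈ F, A.IsWF) :
    ((∃ K : Subfield (HahnSeries G k),
        (K : Set (HahnSeries G k)) = {a : HahnSeries G k | a.support ∈ F} ∧
        ∀ (α : k) (g : G), HahnSeries.single g α ∈ K) ↔
      ((∀ g : G, ({g} : Set G) ∈ F) ∧
       (∀ A ∈ F, ∀ B ⊆ A, B ∈ F) ∧
       (∀ A ∈ F, ∀ B ∈ F, A ∪ B ∈ F) ∧
       (∀ A ∈ F, ∀ B ∈ F, A + B ∈ F) ∧
       (∀ A ∈ F, A ⊆ {g : G | 0 ≤ g} → (AddSubmonoid.closure A : Set G) ∈ F))) ∧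
    ((∃ K : Subfield (HahnSeries G k),
        (K : Set (HahnSeries G k)) = {a : HahnSeries G k | a.support ∈ F} ∧
        ∀ (α : k) (g : G), HahnSeries.single g α ∈ K) →
      ∀ A ∈ F, ∀ B ⊆ A, (∀ b ∈ B, ∀ x ∈ A, x ≤ b → x ∈ B) → B ∈ F) := by
  refine ⟨⟨fun ⟨K, hK, hsingle⟩ => ?_, fun ⟨hS1, hS2, hS3, hA2, hA4⟩ =>
      ⟨HahnHull.subfield hS1 hS2 hS3 hA2 hA4, rfl,
        fun _ g => hS2 _ (hS1 g) _ HahnSeries.support_single_subset⟩⟩,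
    fun ⟨K, hK, _⟩ A hA B hBA _ => HahnHull.subset_mem (Set.ext_iff.1 hK) hWF hA hBA⟩
  have memK : ∀ a, a ∈ K ↔ a.support ∈ F := Set.ext_iff.1 hK
  refine ⟨fun g => ?_, fun A hA B => HahnHull.subset_mem memK hWF hA,
    fun A hA B hB => HahnHull.union_mem memK hWF hA hB,
    fun A hA B hB => HahnHull.add_mem memK hWF hA hB,
    fun A hA hA0 => HahnHull.closure_mem memK hWF hA hA0⟩
  simpa using (memK _).1 (hsingle 1 g)
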